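/- arXiv:2312.12777 — 3 statements merged into one kernel-verified Lean document; each statement's English description precedes it below -/
import Mathlib

section
/- Let h > 0, let B be a finite subset of ℤ^8_h, let l ∈ {0,…,7}, and let f, g : ℤ^8_h → 𝕆. With the translation τ_y f(x) := f(x−y), the following discrete Stokes formulas hold: Σ_{x∈∂B} (f(x)·g(x))·n_l^{+}(x)·s(x) = h^8 · Σ_{x∈B} [ (∂_l^{−,h}f)(x)·g(x) + (τ_{he_l}f)(x)·(∂_l^{−,h}g)(x) ] = h^8 · Σ_{x∈B} [ (∂_l^{−,h}f)(x)·(τ_{he_l}g)(x) + f(x)·(∂_l^{−,h}g)(x) ], and Σ_{x∈∂B} (f(x)·g(x))·n_l^{−}(x)·s(x) = h^8 · Σ_{x∈B} [ (∂_l^{+,h}f)(x)·g(x) + (τ_{−he_l}f)(x)·(∂_l^{+,h}g)(x) ] = h^8 · Σ_{x∈B} [ (∂_l^{+,h}f)(x)·(τ_{−he_l}g)(x) + f(x)·(∂_l^{+,h}g)(x) ]. -/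
open MeasureTheory Real Filter Topology
open scoped BigOperators

noncomputable section

/-- The octonions, as the Euclidean space `ℝ^8`. -/
abbrev Oct : Type := EuclideanSpace ℝ (Fin 8)

/-- The unit lattice `ℤ^8`. -/
abbrev Lat8 : Type := Fin 8 → ℤ

/-- The standard basis `e_0, …, e_7` of the octonions. -/
def octBasis (l : Fin 8) : Oct := EuclideanSpace.single l 1

/-- The distinguished triples where the antisymmetric tensor `ε` equals 1. -/
def tripleList : List (Fin 8 × Fin 8 × Fin 8) :=
  [(1,2,3),(1,4,5),(1,7,6),(2,4,6),(2,5,7),(3,4,7),(3,6,5)]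

/-- The totally antisymmetric tensor `ε_{ijk}`. -/
def eps (i j k : Fin 8) : ℝ :=
  if (i,j,k) ∈ tripleList ∨ (j,k,i) ∈ tripleList ∨ (k,i,j) ∈ tripleList then 1
  else if (i,k,j) ∈ tripleList ∨ (k,j,i) ∈ tripleList ∨ (j,i,k) ∈ tripleList then -1
  else 0

/-- Structure constants of octonion multiplication: coefficient of `e_k` in `e_i e_j`. -/
def structC (i j k : Fin 8) : ℝ :=
  if i = 0 then (if k = j then 1 else 0)
  else if j = 0 then (if k = i then 1 else 0)
  else if k = 0 then (if i = j then -1 else 0)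
  else eps i j k

/-- Octonion multiplication. -/
def octMul (x y : Oct) : Oct :=
  WithLp.toLp 2 fun k => ∑ i : Fin 8, ∑ j : Fin 8, x i * y j * structC i j k

/-- Octonion conjugation `x̄`. -/
def octConj (x : Oct) : Oct := WithLp.toLp 2 fun k => if k = 0 then x 0 else -x k

/-- The standard basis vector of the integer lattice. -/
def unitL (l : Fin 8) : Lat8 := fun k => if k = l then 1 else 0

/-- The embedding of `ℤ^8_h = (hℤ)^8` into `ℝ^8 = 𝕆`. -/
def toOct (h : ℝ) (x : Lat8) : Oct := WithLp.toLp 2 fun k => h * (x k : ℝ)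

section diffs
variable {V : Type*} [AddCommGroup V] [Module ℝ V]

/-- Forward difference `∂_l^{+,h}` (on functions of the integer lattice, mesh `h`). -/
def fdiff (h : ℝ) (f : Lat8 → V) (l : Fin 8) (x : Lat8) : V := h⁻¹ • (f (x + unitL l) - f x)

/-- Backward difference `∂_l^{-,h}`. -/
def bdiff (h : ℝ) (f : Lat8 → V) (l : Fin 8) (x : Lat8) : V := h⁻¹ • (f x - f (x - unitL l))

/-- Central difference `∂_l^h`. -/
def cdiff (h : ℝ) (f : Lat8 → V) (l : Fin 8) (x : Lat8) : V :=
  (2:ℝ)⁻¹ • (fdiff h f l x + bdiff h f l x)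

end diffs

/-- The discrete Dirac (Cauchy–Fueter) operator `D^h`. -/
def DiracD (h : ℝ) (f : Lat8 → Oct) (x : Lat8) : Oct :=
  ∑ l : Fin 8, octMul (octBasis l) (cdiff h f l x)

/-- Indicator function `χ_B`. -/
def chi (B : Set Lat8) : Lat8 → ℝ := B.indicator fun _ => 1

/-- The discrete neighbourhood `N(x) = {x, x ± he_0, …, x ± he_7}` (integer coordinates). -/
def nbhdSet (x : Lat8) : Set Lat8 := {x} ∪ ⋃ l : Fin 8, {x + unitL l, x - unitL l}

/-- The discrete boundary of a set of lattice points. -/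
def dBdryS (S : Set Lat8) : Set Lat8 :=
  {x | (nbhdSet x ∩ S).Nonempty ∧ (nbhdSet x ∩ Sᶜ).Nonempty}

/-- The discrete interior `S° = S ∖ ∂S`. -/
def dIntS (S : Set Lat8) : Set Lat8 := S \ dBdryS S

/-- The discrete neighbourhood as a finset. -/
def nbhdF (x : Lat8) : Finset Lat8 :=
  insert x ((Finset.univ : Finset (Fin 8)).biUnion fun l => {x + unitL l, x - unitL l})

/-- The discrete boundary of a finite set of lattice points, as a finset. -/
def bdryF (B : Finset Lat8) : Finset Lat8 :=
  @Finset.filter _ (fun x => x ∈ dBdryS (↑B : Set Lat8)) (Classical.decPred _)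
    (B.biUnion nbhdF)

/-- The quantity `Σ_l [(∂_l^{+,h}χ_B)² + (∂_l^{-,h}χ_B)²]`. -/
def wfun (h : ℝ) (B : Finset Lat8) (x : Lat8) : ℝ :=
  ∑ l : Fin 8, ((fdiff h (chi ↑B) l x)^2 + (bdiff h (chi ↑B) l x)^2)

/-- The discrete boundary measure density `s(x)`, extended by `0` off `∂B`. -/
def sfun (h : ℝ) (B : Finset Lat8) : Lat8 → ℝ :=
  (dBdryS (↑B : Set Lat8)).indicator fun x => (h^8/2) * Real.sqrt (wfun h B x)

/-- The outward normal component `n_l^{+}(x)`, extended by `0` off `∂B`. -/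
def nplus (h : ℝ) (B : Finset Lat8) (l : Fin 8) : Lat8 → ℝ :=
  (dBdryS (↑B : Set Lat8)).indicator fun x =>
    (-2 * fdiff h (chi ↑B) l x) / Real.sqrt (wfun h B x)

/-- The outward normal component `n_l^{-}(x)`, extended by `0` off `∂B`. -/
def nminus (h : ℝ) (B : Finset Lat8) (l : Fin 8) : Lat8 → ℝ :=
  (dBdryS (↑B : Set Lat8)).indicator fun x =>
    (-2 * bdiff h (chi ↑B) l x) / Real.sqrt (wfun h B x)

/-- The cube `[-π,π]^8`. -/
def cube : Set (Fin 8 → ℝ) := Set.univ.pi fun _ => Set.Icc (-Real.pi) Real.pi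

/-- The `l`-th (complex) coefficient integral of the discrete fundamental solution `E¹`. -/
def E1coeff (l : Fin 8) (x : Lat8) : ℂ :=
  -((((2*Real.pi)^8 : ℝ) : ℂ))⁻¹ *
    ∫ u in cube,
      (Complex.I * ((Real.sin (u l) : ℝ) : ℂ) / (((∑ m : Fin 8, (Real.sin (u m))^2 : ℝ)) : ℂ)) *
        Complex.exp (Complex.I * (((∑ m : Fin 8, u m * (x m : ℝ)) : ℝ) : ℂ))

/-- The sign of the conjugate basis vector `ē_l` relative to `e_l`. -/
def ebarSign (l : Fin 8) : ℝ := if l = 0 then 1 else -1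

/-- The discrete fundamental solution `E¹` on the unit lattice (each coefficient of the
defining integral is real, so `E¹` is octonion-valued). -/
def E1 (x : Lat8) : Oct := WithLp.toLp 2 fun l => ebarSign l * (E1coeff l x).re

/-- The discrete fundamental solution `E^h(x) = h^{-7} E¹(x/h)` (integer coordinates). -/
def Eh (h : ℝ) (x : Lat8) : Oct := (h^7)⁻¹ • E1 x

/-- The discrete Dirac delta `δ_0^h`. -/
def deltah (h : ℝ) (x : Lat8) : ℝ := if x = 0 then (h^8)⁻¹ else 0

/-- The star product `K^h(x,y) ∗ a`. -/
def Kstar (h : ℝ) (B : Finset Lat8) (x y : Lat8) (a : Oct) : Oct :=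
  -((2:ℝ)⁻¹ • ∑ l : Fin 8,
    octMul (nminus h B l x • Eh h (unitL l - x + y) + nplus h B l x • Eh h (-unitL l - x + y))
      (octMul (octBasis l) a))

/-- The discrete Cauchy–Bitsadze operator `C^h_{∂B}`. -/
def CauchyOp (h : ℝ) (B : Finset Lat8) (f : Lat8 → Oct) (y : Lat8) : Oct :=
  ∑ x ∈ bdryF B, sfun h B x • Kstar h B x y (f x)

/-- The discrete Teodorescu operator `T^h_B`. -/
def Teo (h : ℝ) (B : Finset Lat8) (f : Lat8 → Oct) (y : Lat8) : Oct :=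
  (h^8 : ℝ) • ∑ x ∈ B, octMul (Eh h (y - x)) (f x)

/-- The singular integral operator `S^h_{∂B}`. -/
def SOp (h : ℝ) (B : Finset Lat8) (f : Lat8 → Oct) (y : Lat8) : Oct :=
  (2:ℝ) • ∑ x ∈ bdryF B, sfun h B x • Kstar h B x y (f x - f y) + f y

/-- The discrete Plemelj projection `P^h_{∂B}`. -/
def POp (h : ℝ) (B : Finset Lat8) (f : Lat8 → Oct) (y : Lat8) : Oct :=
  (2:ℝ)⁻¹ • (f y + SOp h B f y)

/-- The discrete Plemelj projection `Q^h_{∂B}`. -/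
def QOp (h : ℝ) (B : Finset Lat8) (f : Lat8 → Oct) (y : Lat8) : Oct :=
  (2:ℝ)⁻¹ • (f y - SOp h B f y)

/-- `g` vanishes at infinity on the lattice `ℤ^8_h`. -/
def VanishesAtInfty (h : ℝ) (g : Lat8 → Oct) : Prop :=
  ∀ ε > (0:ℝ), ∃ R > (0:ℝ), ∀ y : Lat8, R < ‖toOct h y‖ → ‖g y‖ < ε

open scoped Classical in
/-- The continuous fundamental solution `E(x) = (3/π⁴) x̄ / ‖x‖⁸`, with `E(0) = 0`. -/
def Econt (z : Oct) : Oct :=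
  if z = 0 then 0 else ((3 / Real.pi^4) * (‖z‖^8)⁻¹) • octConj z

/-- The weight `ω(x) = Π_l (1 + 2 cos(π x_l))` on the unit lattice. -/
def omegaFun (x : Lat8) : ℝ := ∏ l : Fin 8, (1 + 2 * Real.cos (Real.pi * (x l : ℝ)))

/-- The continuous Dirac operator `D`. -/
def DiracC (F : Oct → Oct) (x : Oct) : Oct :=
  ∑ l : Fin 8, octMul (octBasis l) (fderiv ℝ F x (octBasis l))

/-- Convergence of discrete sets `B^h ⊆ ℤ^8_h` to a bounded open set `B ⊆ ℝ^8`. -/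
def ConvergesTo (Bh : ℝ → Set Lat8) (B : Set Oct) : Prop :=
  ∀ ε > (0:ℝ), ∃ δ > (0:ℝ), ∀ h : ℝ, 0 < h → h < δ →
    (∀ a ∈ frontier B, ∃ b ∈ dBdryS (Bh h), dist a (toOct h b) ≤ ε) ∧
    (∀ b ∈ dBdryS (Bh h), ∃ a ∈ frontier B, dist (toOct h b) a ≤ ε) ∧
    (∀ a ∈ closure B, ∃ b ∈ Bh h, dist a (toOct h b) ≤ ε) ∧
    (∀ b ∈ Bh h, ∃ a ∈ closure B, dist (toOct h b) a ≤ ε)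

/-- The rate condition `B = B^h + O(h²)`, i.e. `h^8 · #(B^h ∖ B) = O(h²)` as `h → 0⁺`. -/
def RateO2 (Bh : ℝ → Set Lat8) (B : Set Oct) : Prop :=
  (fun h : ℝ => h^8 * ((Bh h \ {x : Lat8 | toOct h x ∈ B}).ncard : ℝ))
    =O[𝓝[>] (0:ℝ)] (fun h : ℝ => h^2)


section StokesHelpers

/-! ### Bilinearity of octonion multiplication -/

lemma octMul_add_left (a b c : Oct) : octMul (a + b) c = octMul a c + octMul b c := by
  ext k
  simp [octMul, PiLp.add_apply, add_mul, Finset.sum_add_distrib]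

lemma octMul_sub_left (a b c : Oct) : octMul (a - b) c = octMul a c - octMul b c := by
  ext k
  simp [octMul, PiLp.sub_apply, sub_mul, Finset.sum_sub_distrib]

lemma octMul_smul_left (r : ℝ) (a c : Oct) : octMul (r • a) c = r • octMul a c := by
  ext k
  simp [octMul, PiLp.smul_apply, smul_eq_mul, Finset.mul_sum, mul_assoc]

lemma octMul_sub_right (a b c : Oct) : octMul a (b - c) = octMul a b - octMul a c := by
  ext k
  simp [octMul, PiLp.sub_apply, sub_mul, mul_sub, Finset.sum_sub_distrib]

lemma octMul_smul_right (r : ℝ) (a c : Oct) : octMul a (r • c) = r • octMul a c := by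
  ext k
  simp only [octMul, PiLp.toLp_apply, PiLp.smul_apply, smul_eq_mul, Finset.mul_sum]
  congr 1; funext i; congr 1; funext j; ring

/-! ### Lattice and indicator lemmas -/

lemma chi_apply (B : Finset Lat8) (x : Lat8) : chi ↑B x = if x ∈ B then 1 else 0 := by
  by_cases hx : x ∈ B <;> simp [chi, hx]

lemma mem_nbhdSet {x y : Lat8} :
    y ∈ nbhdSet x ↔ y = x ∨ ∃ l, y = x + unitL l ∨ y = x - unitL l := by
  simp [nbhdSet]

lemma mem_nbhdF {x y : Lat8} :
    y ∈ nbhdF x ↔ y = x ∨ ∃ l, y = x + unitL l ∨ y = x - unitL l := by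
  simp [nbhdF]

lemma mem_bdryF {B : Finset Lat8} {x : Lat8} :
    x ∈ bdryF B ↔ x ∈ B.biUnion nbhdF ∧ x ∈ dBdryS (↑B : Set Lat8) := by
  simp [bdryF, Finset.mem_filter]

/-- If the forward difference of `χ_B` is nonzero at `x`, then `x ∈ ∂B`. -/
lemma mem_bdryF_fwd {h : ℝ} {B : Finset Lat8} {l : Fin 8} {x : Lat8}
    (hne : fdiff h (chi ↑B) l x ≠ 0) : x ∈ bdryF B := by
  have hch : chi ↑B (x + unitL l) ≠ chi ↑B x := by
    intro he
    apply hne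
    rw [fdiff, he, sub_self, smul_zero]
  rw [chi_apply, chi_apply] at hch
  by_cases h1 : x ∈ B <;> by_cases h2 : x + unitL l ∈ B <;> simp [h1, h2] at hch
  · -- x ∈ B, x + e ∉ B
    refine mem_bdryF.mpr ⟨Finset.mem_biUnion.mpr ⟨x, h1, ?_⟩, ⟨x, mem_nbhdSet.mpr (Or.inl rfl), Finset.mem_coe.mpr h1⟩, ⟨x + unitL l, mem_nbhdSet.mpr (Or.inr ⟨l, Or.inl rfl⟩), by simpa using h2⟩⟩
    exact mem_nbhdF.mpr (Or.inl rfl)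
  · -- x ∉ B, x + e ∈ B
    refine mem_bdryF.mpr ⟨Finset.mem_biUnion.mpr ⟨x + unitL l, h2, ?_⟩,
      ⟨x + unitL l, mem_nbhdSet.mpr (Or.inr ⟨l, Or.inl rfl⟩), Finset.mem_coe.mpr h2⟩,
      ⟨x, mem_nbhdSet.mpr (Or.inl rfl), by simpa using h1⟩⟩
    exact mem_nbhdF.mpr (Or.inr ⟨l, Or.inr (by rw [add_sub_cancel_right])⟩)

/-- If the backward difference of `χ_B` is nonzero at `x`, then `x ∈ ∂B`. -/
lemma mem_bdryF_bwd {h : ℝ} {B : Finset Lat8} {l : Fin 8} {x : Lat8}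
    (hne : bdiff h (chi ↑B) l x ≠ 0) : x ∈ bdryF B := by
  have hch : chi ↑B (x - unitL l) ≠ chi ↑B x := by
    intro he
    apply hne
    rw [bdiff, he, sub_self, smul_zero]
  rw [chi_apply, chi_apply] at hch
  by_cases h1 : x ∈ B <;> by_cases h2 : x - unitL l ∈ B <;> simp [h1, h2] at hch
  · refine mem_bdryF.mpr ⟨Finset.mem_biUnion.mpr ⟨x, h1, ?_⟩, ⟨x, mem_nbhdSet.mpr (Or.inl rfl), Finset.mem_coe.mpr h1⟩, ⟨x - unitL l, mem_nbhdSet.mpr (Or.inr ⟨l, Or.inr rfl⟩), by simpa using h2⟩⟩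
    exact mem_nbhdF.mpr (Or.inl rfl)
  · refine mem_bdryF.mpr ⟨Finset.mem_biUnion.mpr ⟨x - unitL l, h2, ?_⟩,
      ⟨x - unitL l, mem_nbhdSet.mpr (Or.inr ⟨l, Or.inr rfl⟩), Finset.mem_coe.mpr h2⟩,
      ⟨x, mem_nbhdSet.mpr (Or.inl rfl), by simpa using h1⟩⟩
    exact mem_nbhdF.mpr (Or.inr ⟨l, Or.inl (by rw [sub_add_cancel])⟩)

/-- `w > 0` on the discrete boundary. -/
lemma wfun_pos {h : ℝ} (hh : h ≠ 0) {B : Finset Lat8} {x : Lat8}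
    (hx : x ∈ dBdryS (↑B : Set Lat8)) : 0 < wfun h B x := by
  have hnn : ∀ l ∈ (Finset.univ : Finset (Fin 8)),
      (0:ℝ) ≤ (fdiff h (chi ↑B) l x)^2 + (bdiff h (chi ↑B) l x)^2 :=
    fun l _ => add_nonneg (sq_nonneg _) (sq_nonneg _)
  rcases (Finset.sum_nonneg hnn).lt_or_eq with hpos | heq
  · exact hpos
  exfalso
  have hall := (Finset.sum_eq_zero_iff_of_nonneg hnn).mp heq.symm
  have hconst : ∀ y ∈ nbhdSet x, chi ↑B y = chi ↑B x := by
    intro y hy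
    rcases mem_nbhdSet.mp hy with rfl | ⟨m, rfl | rfl⟩
    · rfl
    · have hm := (add_eq_zero_iff_of_nonneg (sq_nonneg _) (sq_nonneg _)).mp
        (hall m (Finset.mem_univ m))
      have h1 : fdiff h (chi ↑B) m x = 0 := by
        have := hm.1; exact sq_eq_zero_iff.mp this
      rw [fdiff, smul_eq_mul] at h1
      rcases mul_eq_zero.mp h1 with h2 | h2
      · exact absurd h2 (inv_ne_zero hh)
      · exact sub_eq_zero.mp h2
    · have hm := (add_eq_zero_iff_of_nonneg (sq_nonneg _) (sq_nonneg _)).mp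
        (hall m (Finset.mem_univ m))
      have h1 : bdiff h (chi ↑B) m x = 0 := sq_eq_zero_iff.mp hm.2
      rw [bdiff, smul_eq_mul] at h1
      rcases mul_eq_zero.mp h1 with h2 | h2
      · exact absurd h2 (inv_ne_zero hh)
      · exact (sub_eq_zero.mp h2).symm
  obtain ⟨⟨a, ha, haB⟩, ⟨b, hb, hbB⟩⟩ := hx
  have h1 : chi ↑B a = 1 := by rw [chi_apply]; simp [Finset.mem_coe.mp haB]
  have h0 : chi ↑B b = 0 := by
    rw [chi_apply, if_neg (fun hb' => hbB (Finset.mem_coe.mpr hb'))]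
  have := (hconst a ha).trans (hconst b hb).symm
  rw [h1, h0] at this
  exact one_ne_zero this

/-- The coefficient identity for `n_l^+ · s`. -/
lemma nplus_sfun {h : ℝ} (hh : 0 < h) (B : Finset Lat8) (l : Fin 8) (x : Lat8) :
    nplus h B l x * sfun h B x = (-(h^8)) * fdiff h (chi ↑B) l x := by
  by_cases hx : x ∈ dBdryS (↑B : Set Lat8)
  · rw [nplus, sfun, Set.indicator_of_mem hx, Set.indicator_of_mem hx]
    have hw := wfun_pos hh.ne' hx
    have hs : Real.sqrt (wfun h B x) ≠ 0 := (Real.sqrt_pos.mpr hw).ne'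
    field_simp
  · rw [nplus, sfun, Set.indicator_of_notMem hx, Set.indicator_of_notMem hx]
    have h0 : fdiff h (chi ↑B) l x = 0 := by
      by_contra hne
      exact hx (mem_bdryF.mp (mem_bdryF_fwd hne)).2
    rw [h0]; ring

/-- The coefficient identity for `n_l^- · s`. -/
lemma nminus_sfun {h : ℝ} (hh : 0 < h) (B : Finset Lat8) (l : Fin 8) (x : Lat8) :
    nminus h B l x * sfun h B x = (-(h^8)) * bdiff h (chi ↑B) l x := by
  by_cases hx : x ∈ dBdryS (↑B : Set Lat8)
  · rw [nminus, sfun, Set.indicator_of_mem hx, Set.indicator_of_mem hx]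
    have hw := wfun_pos hh.ne' hx
    have hs : Real.sqrt (wfun h B x) ≠ 0 := (Real.sqrt_pos.mpr hw).ne'
    field_simp
  · rw [nminus, sfun, Set.indicator_of_notMem hx, Set.indicator_of_notMem hx]
    have h0 : bdiff h (chi ↑B) l x = 0 := by
      by_contra hne
      exact hx (mem_bdryF.mp (mem_bdryF_bwd hne)).2
    rw [h0]; ring

/-- Summing `χ_B • F` over any superset of `B` gives the sum over `B`. -/
lemma sum_chi_smul {S B : Finset Lat8} (hBS : B ⊆ S) (F : Lat8 → Oct) :
    ∑ x ∈ S, chi ↑B x • F x = ∑ x ∈ B, F x := by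
  rw [← Finset.sum_subset hBS (fun x _ hx => by rw [chi_apply, if_neg hx, zero_smul])]
  exact Finset.sum_congr rfl fun x hx => by rw [chi_apply, if_pos hx, one_smul]

end StokesHelpers


section StokesSums

/-- Master summation identity for the `n_l^+` boundary sum. -/
lemma sum_nplus {h : ℝ} (hh : 0 < h) (B : Finset Lat8) (l : Fin 8) (F : Lat8 → Oct) :
    ∑ x ∈ bdryF B, (nplus h B l x * sfun h B x) • F x
      = (h^8 : ℝ) • ∑ x ∈ B, (h⁻¹ : ℝ) • (F x - F (x - unitL l)) := by
  classical
  set S : Finset Lat8 := (bdryF B ∪ B) ∪ B.image (fun y => y - unitL l) with hS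
  have hsub : bdryF B ⊆ S := fun x hx =>
    Finset.mem_union_left _ (Finset.mem_union_left _ hx)
  have hBS : B ⊆ S := fun x hx => Finset.mem_union_left _ (Finset.mem_union_right _ hx)
  have hBimg : B ⊆ S.image (fun x => x + unitL l) := fun y hy =>
    Finset.mem_image.mpr ⟨y - unitL l,
      Finset.mem_union_right _ (Finset.mem_image_of_mem _ hy), by abel⟩
  have e1 : ∑ x ∈ bdryF B, (nplus h B l x * sfun h B x) • F x
      = ∑ x ∈ S, (-(h^8) * fdiff h (chi ↑B) l x) • F x := by
    rw [Finset.sum_congr rfl (fun x _ => by rw [nplus_sfun hh])]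
    refine Finset.sum_subset hsub (fun x _ hx => ?_)
    have h0 : fdiff h (chi ↑B) l x = 0 := by
      by_contra hne; exact hx (mem_bdryF_fwd hne)
    rw [h0, mul_zero, zero_smul]
  have e2 : ∀ x : Lat8, (-(h^8) * fdiff h (chi ↑B) l x) • F x
      = (h^8 : ℝ) • ((h⁻¹ : ℝ) • ((chi ↑B x) • F x - (chi ↑B (x + unitL l)) • F x)) := by
    intro x
    rw [fdiff, smul_eq_mul, ← sub_smul, smul_smul, smul_smul]
    congr 1
    ring
  have e4 : ∑ x ∈ S, chi ↑B (x + unitL l) • F x = ∑ y ∈ B, F (y - unitL l) := by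
    have hinj : ∀ a ∈ S, ∀ b ∈ S, a + unitL l = b + unitL l → a = b :=
      fun a _ b _ hab => add_right_cancel hab
    calc ∑ x ∈ S, chi ↑B (x + unitL l) • F x
        = ∑ y ∈ S.image (fun x => x + unitL l), chi ↑B y • F (y - unitL l) := by
          rw [Finset.sum_image hinj]
          exact Finset.sum_congr rfl fun x _ => by rw [add_sub_cancel_right]
      _ = ∑ y ∈ B, F (y - unitL l) := sum_chi_smul hBimg _
  rw [e1, Finset.sum_congr rfl (fun x _ => e2 x), ← Finset.smul_sum, ← Finset.smul_sum,
    Finset.sum_sub_distrib, sum_chi_smul hBS, e4]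
  congr 1
  rw [← Finset.sum_sub_distrib, Finset.smul_sum]

/-- Master summation identity for the `n_l^-` boundary sum. -/
lemma sum_nminus {h : ℝ} (hh : 0 < h) (B : Finset Lat8) (l : Fin 8) (F : Lat8 → Oct) :
    ∑ x ∈ bdryF B, (nminus h B l x * sfun h B x) • F x
      = (h^8 : ℝ) • ∑ x ∈ B, (h⁻¹ : ℝ) • (F (x + unitL l) - F x) := by
  classical
  set S : Finset Lat8 := (bdryF B ∪ B) ∪ B.image (fun y => y + unitL l) with hS
  have hsub : bdryF B ⊆ S := fun x hx =>
    Finset.mem_union_left _ (Finset.mem_union_left _ hx)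
  have hBS : B ⊆ S := fun x hx => Finset.mem_union_left _ (Finset.mem_union_right _ hx)
  have hBimg : B ⊆ S.image (fun x => x - unitL l) := fun y hy =>
    Finset.mem_image.mpr ⟨y + unitL l,
      Finset.mem_union_right _ (Finset.mem_image_of_mem _ hy), by abel⟩
  have e1 : ∑ x ∈ bdryF B, (nminus h B l x * sfun h B x) • F x
      = ∑ x ∈ S, (-(h^8) * bdiff h (chi ↑B) l x) • F x := by
    rw [Finset.sum_congr rfl (fun x _ => by rw [nminus_sfun hh])]
    refine Finset.sum_subset hsub (fun x _ hx => ?_)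
    have h0 : bdiff h (chi ↑B) l x = 0 := by
      by_contra hne; exact hx (mem_bdryF_bwd hne)
    rw [h0, mul_zero, zero_smul]
  have e2 : ∀ x : Lat8, (-(h^8) * bdiff h (chi ↑B) l x) • F x
      = (h^8 : ℝ) • ((h⁻¹ : ℝ) • ((chi ↑B (x - unitL l)) • F x - (chi ↑B x) • F x)) := by
    intro x
    rw [bdiff, smul_eq_mul, ← sub_smul, smul_smul, smul_smul]
    congr 1
    ring
  have e4 : ∑ x ∈ S, chi ↑B (x - unitL l) • F x = ∑ y ∈ B, F (y + unitL l) := by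
    have hinj : ∀ a ∈ S, ∀ b ∈ S, a - unitL l = b - unitL l → a = b := by
      intro a _ b _ hab
      have := congrArg (fun z => z + unitL l) hab
      simpa [sub_add_cancel] using this
    calc ∑ x ∈ S, chi ↑B (x - unitL l) • F x
        = ∑ y ∈ S.image (fun x => x - unitL l), chi ↑B y • F (y + unitL l) := by
          rw [Finset.sum_image hinj]
          exact Finset.sum_congr rfl fun x _ => by rw [sub_add_cancel]
      _ = ∑ y ∈ B, F (y + unitL l) := sum_chi_smul hBimg _
  rw [e1, Finset.sum_congr rfl (fun x _ => e2 x), ← Finset.smul_sum, ← Finset.smul_sum,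
    Finset.sum_sub_distrib, sum_chi_smul hBS, e4]
  congr 1
  rw [← Finset.sum_sub_distrib, Finset.smul_sum]

end StokesSums


/-- the discrete Stokes formulas. -/
theorem discrete_stokes (h : ℝ) (hh : 0 < h) (B : Finset Lat8) (l : Fin 8)
    (f g : Lat8 → Oct) :
    (∑ x ∈ bdryF B, (nplus h B l x * sfun h B x) • octMul (f x) (g x)
        = (h^8 : ℝ) • ∑ x ∈ B,
            (octMul (bdiff h f l x) (g x) + octMul (f (x - unitL l)) (bdiff h g l x))) ∧
    (∑ x ∈ bdryF B, (nplus h B l x * sfun h B x) • octMul (f x) (g x)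
        = (h^8 : ℝ) • ∑ x ∈ B,
            (octMul (bdiff h f l x) (g (x - unitL l)) + octMul (f x) (bdiff h g l x))) ∧
    (∑ x ∈ bdryF B, (nminus h B l x * sfun h B x) • octMul (f x) (g x)
        = (h^8 : ℝ) • ∑ x ∈ B,
            (octMul (fdiff h f l x) (g x) + octMul (f (x + unitL l)) (fdiff h g l x))) ∧
    (∑ x ∈ bdryF B, (nminus h B l x * sfun h B x) • octMul (f x) (g x)
        = (h^8 : ℝ) • ∑ x ∈ B,
            (octMul (fdiff h f l x) (g (x + unitL l)) + octMul (f x) (fdiff h g l x))) := by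
  refine ⟨?_, ?_, ?_, ?_⟩
  · rw [sum_nplus hh B l (fun x => octMul (f x) (g x))]
    congr 1
    refine Finset.sum_congr rfl fun x _ => ?_
    simp only [bdiff]
    rw [octMul_smul_left, octMul_smul_right, ← smul_add, octMul_sub_left, octMul_sub_right]
    congr 1
    abel
  · rw [sum_nplus hh B l (fun x => octMul (f x) (g x))]
    congr 1
    refine Finset.sum_congr rfl fun x _ => ?_
    simp only [bdiff]
    rw [octMul_smul_left, octMul_smul_right, ← smul_add, octMul_sub_left, octMul_sub_right]
    congr 1
    abel
  · rw [sum_nminus hh B l (fun x => octMul (f x) (g x))]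
    congr 1
    refine Finset.sum_congr rfl fun x _ => ?_
    simp only [fdiff]
    rw [octMul_smul_left, octMul_smul_right, ← smul_add, octMul_sub_left, octMul_sub_right]
    congr 1
    abel
  · rw [sum_nminus hh B l (fun x => octMul (f x) (g x))]
    congr 1
    refine Finset.sum_congr rfl fun x _ => ?_
    simp only [fdiff]
    rw [octMul_smul_left, octMul_smul_right, ← smul_add, octMul_sub_left, octMul_sub_right]
    congr 1
    abel

end
end

section
/- The discrete fundamental solution E¹ is square-summable on the unit lattice: Σ_{x∈ℤ^8} ‖E¹(x)‖² < ∞. -/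
open MeasureTheory Real Filter Topology
open scoped BigOperators

noncomputable section

-- my lemmas start here
lemma cube_measurable : MeasurableSet cube :=
  MeasurableSet.univ_pi fun _ => measurableSet_Icc

lemma indicator_pi_prod (S : Fin 8 → Set ℝ) (f : Fin 8 → ℝ → ℂ) (u : Fin 8 → ℝ) :
    (Set.univ.pi S).indicator (fun v => ∏ m, f m (v m)) u = ∏ m, (S m).indicator (f m) (u m) := by
  by_cases h : u ∈ Set.univ.pi S
  · rw [Set.indicator_of_mem h]
    exact Finset.prod_congr rfl fun m _ => (Set.indicator_of_mem (h m (Set.mem_univ m)) _).symm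
  · rw [Set.indicator_of_notMem h]
    rw [Set.mem_pi] at h
    push_neg at h
    obtain ⟨m, -, hm⟩ := h
    exact (Finset.prod_eq_zero (Finset.mem_univ m) (Set.indicator_of_notMem hm _)).symm

lemma cube_integral_prod (f : Fin 8 → ℝ → ℂ) :
    ∫ u in cube, ∏ m, f m (u m) = ∏ m, ∫ t in Set.Icc (-Real.pi) Real.pi, f m t := by
  rw [← integral_indicator cube_measurable]
  have : ∀ u : Fin 8 → ℝ, cube.indicator (fun v => ∏ m, f m (v m)) u
      = ∏ m, (Set.Icc (-Real.pi) Real.pi).indicator (f m) (u m) := fun u =>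
    indicator_pi_prod _ f u
  rw [show cube.indicator (fun v => ∏ m, f m (v m)) = fun u => ∏ m, (Set.Icc (-Real.pi) Real.pi).indicator (f m) (u m) from funext this]
  rw [MeasureTheory.volume_pi, MeasureTheory.integral_fintype_prod_eq_prod (ι := Fin 8) (fun m => (Set.Icc (-Real.pi) Real.pi).indicator (f m))]
  exact Finset.prod_congr rfl fun m _ => (integral_indicator measurableSet_Icc)

lemma int1d (n : ℤ) : ∫ t in Set.Icc (-Real.pi) Real.pi, Complex.exp (Complex.I * n * t)
    = if n = 0 then ((2*Real.pi : ℝ) : ℂ) else 0 := by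
  have hle : -Real.pi ≤ Real.pi := by linarith [Real.pi_pos]
  rw [MeasureTheory.integral_Icc_eq_integral_Ioc,
      ← intervalIntegral.integral_of_le hle]
  rcases eq_or_ne n 0 with rfl | hn
  · simp [Complex.ofReal_neg]
    ring
  · rw [if_neg hn]
    have hc : (Complex.I * n) ≠ 0 := by
      simp [Complex.I_ne_zero, hn]
    have h := integral_exp_mul_complex (a := -Real.pi) (b := Real.pi) hc
    simp only [mul_assoc] at h ⊢
    rw [h]
    have : Complex.exp (Complex.I * (n * (Real.pi : ℂ))) = Complex.exp (Complex.I * (n * ((-Real.pi : ℝ) : ℂ))) := by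
      rw [show Complex.I * (n * ((-Real.pi : ℝ) : ℂ)) = Complex.I * (n * (Real.pi:ℂ)) - n * (2 * Real.pi * Complex.I) by push_cast; ring,
        Complex.exp_sub, Complex.exp_int_mul_two_pi_mul_I]
      simp
    rw [this, sub_self, zero_div]

lemma meas_abs_rpow : Measurable (fun x : ℝ => |x| ^ (-(4⁻¹:ℝ))) := by fun_prop

lemma abs_rpow_ii (a b : ℝ) :
    IntervalIntegrable (fun x : ℝ => |x| ^ (-(4⁻¹:ℝ))) volume a b := by
  have hr : (-1:ℝ) < -(4⁻¹:ℝ) := by norm_num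
  have key : ∀ c : ℝ, 0 ≤ c → IntervalIntegrable (fun x : ℝ => |x| ^ (-(4⁻¹:ℝ))) volume 0 c := by
    intro c hc
    refine (intervalIntegral.intervalIntegrable_rpow' hr (a := 0) (b := c)).mono_fun
      meas_abs_rpow.aestronglyMeasurable.restrict ?_
    have : Set.uIoc (0:ℝ) c ⊆ Set.Ioc 0 c := by
      rw [Set.uIoc_of_le hc]
    filter_upwards [ae_restrict_mem measurableSet_uIoc] with x hx
    have hx0 : 0 < x := (this hx).1
    rw [show |x| = x from abs_of_pos hx0]
  have keyneg : ∀ c : ℝ, c ≤ 0 → IntervalIntegrable (fun x : ℝ => |x| ^ (-(4⁻¹:ℝ))) volume 0 c := by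
    intro c hc
    have h := (key (-c) (neg_nonneg.2 hc)).comp_sub_left 0
    simp only [zero_sub, sub_neg_eq_add, zero_add, abs_neg] at h
    convert h using 2
    norm_num
  have all0 : ∀ c : ℝ, IntervalIntegrable (fun x : ℝ => |x| ^ (-(4⁻¹:ℝ))) volume 0 c := by
    intro c
    rcases le_total 0 c with h | h
    · exact key c h
    · exact keyneg c h
  exact (all0 a).symm.trans (all0 b)

lemma abs_rpow_shift_int (c : ℝ) :
    IntegrableOn (fun t : ℝ => |t - c| ^ (-(4⁻¹:ℝ))) (Set.Icc (-Real.pi) Real.pi) volume := by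
  have h := (abs_rpow_ii (-Real.pi - c) (Real.pi - c)).comp_sub_right c
  simp only [sub_add_cancel] at h
  rw [intervalIntegrable_iff, Set.uIoc_of_le (by linarith [Real.pi_pos])] at h
  exact (integrableOn_Icc_iff_integrableOn_Ioc).2 h

lemma min3_le {t : ℝ} : ∀ r ∈ ({|t|, |t - Real.pi|, |t + Real.pi|} : Set ℝ),
    min (min |t| |t - Real.pi|) |t + Real.pi| ≤ r := by
  rintro r (rfl | rfl | rfl)
  · exact le_trans (min_le_left _ _) (min_le_left _ _)
  · exact le_trans (min_le_left _ _) (min_le_right _ _)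
  · exact min_le_right _ _

/-- Jordan-type lower bound on `[-π,π]`. -/
lemma sin_lower (t : ℝ) (ht : t ∈ Set.Icc (-Real.pi) Real.pi) :
    2 / Real.pi * (min (min |t| |t - Real.pi|) |t + Real.pi|) ≤ |Real.sin t| := by
  obtain ⟨h1, h2⟩ := ht
  have hπ := Real.pi_pos
  have hc : (0:ℝ) ≤ 2 / Real.pi := by positivity
  rcases le_total 0 t with h0 | h0
  · rcases le_total t (Real.pi/2) with hh | hh
    · calc 2 / Real.pi * (min (min |t| |t - Real.pi|) |t + Real.pi|)
          ≤ 2 / Real.pi * t := by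
            refine mul_le_mul_of_nonneg_left ?_ hc
            simpa [abs_of_nonneg h0] using min3_le |t| (by simp)
        _ ≤ Real.sin t := Real.mul_le_sin h0 hh
        _ ≤ |Real.sin t| := le_abs_self _
    · calc 2 / Real.pi * (min (min |t| |t - Real.pi|) |t + Real.pi|)
          ≤ 2 / Real.pi * (Real.pi - t) := by
            refine mul_le_mul_of_nonneg_left ?_ hc
            have : |t - Real.pi| = Real.pi - t := by rw [abs_sub_comm, abs_of_nonneg (by linarith)]
            simpa [this] using min3_le |t - Real.pi| (by simp)
        _ ≤ Real.sin (Real.pi - t) := Real.mul_le_sin (by linarith) (by linarith)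
        _ = Real.sin t := Real.sin_pi_sub t
        _ ≤ |Real.sin t| := le_abs_self _
  · rcases le_total (-(Real.pi/2)) t with hh | hh
    · calc 2 / Real.pi * (min (min |t| |t - Real.pi|) |t + Real.pi|)
          ≤ 2 / Real.pi * (-t) := by
            refine mul_le_mul_of_nonneg_left ?_ hc
            simpa [abs_of_nonpos h0] using min3_le |t| (by simp)
        _ ≤ Real.sin (-t) := Real.mul_le_sin (by linarith) (by linarith)
        _ = -Real.sin t := Real.sin_neg t
        _ ≤ |Real.sin t| := neg_le_abs _
    · calc 2 / Real.pi * (min (min |t| |t - Real.pi|) |t + Real.pi|)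
          ≤ 2 / Real.pi * (t + Real.pi) := by
            refine mul_le_mul_of_nonneg_left ?_ hc
            have : |t + Real.pi| = t + Real.pi := abs_of_nonneg (by linarith)
            simpa [this] using min3_le |t + Real.pi| (by simp)
        _ ≤ Real.sin (t + Real.pi) := Real.mul_le_sin (by linarith) (by linarith)
        _ = -Real.sin t := by rw [Real.sin_add_pi]
        _ ≤ |Real.sin t| := neg_le_abs _

/-- The key 1-d integrability: `|sin t|^{-1/4}` is integrable on `[-π,π]`. -/
lemma sin_rpow_integrable :
    IntegrableOn (fun t : ℝ => |Real.sin t| ^ (-(4⁻¹:ℝ))) (Set.Icc (-Real.pi) Real.pi) volume := by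
  have hπ := Real.pi_pos
  set g : ℝ → ℝ := fun t =>
    (2 / Real.pi) ^ (-(4⁻¹:ℝ)) *
      (|t - 0| ^ (-(4⁻¹:ℝ)) + |t - Real.pi| ^ (-(4⁻¹:ℝ)) + |t - (-Real.pi)| ^ (-(4⁻¹:ℝ))) with hg
  have hgint : IntegrableOn g (Set.Icc (-Real.pi) Real.pi) volume := by
    exact (((abs_rpow_shift_int 0).add (abs_rpow_shift_int Real.pi)).add
      (abs_rpow_shift_int (-Real.pi))).const_mul _
  refine hgint.integrable.mono' ((meas_abs_rpow.comp Real.measurable_sin).aestronglyMeasurable) ?_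
  have h0 : volume ({0, Real.pi, -Real.pi} : Set ℝ) = 0 :=
    (((Set.finite_singleton (-Real.pi)).insert Real.pi).insert (0:ℝ)).measure_zero volume
  have hnull : (volume.restrict (Set.Icc (-Real.pi) Real.pi)) ({0, Real.pi, -Real.pi} : Set ℝ) = 0 :=
    le_antisymm (le_trans (Measure.restrict_apply_le _ _) h0.le) (by simp)
  filter_upwards [ae_restrict_mem measurableSet_Icc,
    (measure_eq_zero_iff_ae_notMem (μ := volume.restrict (Set.Icc (-Real.pi) Real.pi))
      (s := ({0, Real.pi, -Real.pi} : Set ℝ))).1 hnull] with t ht htN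
  have ht0 : t ≠ 0 := fun h => htN (by simp [h])
  have htp : t ≠ Real.pi := fun h => htN (by simp [h])
  have htm : t ≠ -Real.pi := fun h => htN (by simp [h])
  set m := min (min |t| |t - Real.pi|) |t + Real.pi| with hm
  have hmpos : 0 < m := by
    rw [hm]
    refine lt_min (lt_min ?_ ?_) ?_ <;> rw [abs_pos] <;> intro h
    · exact ht0 h
    · exact htp (by linarith [sub_eq_zero.1 h])
    · exact htm (by linarith [h])
  have hsin := sin_lower t ht
  have hsinpos : 0 < 2 / Real.pi * m := by positivity
  rw [Real.norm_eq_abs, abs_of_nonneg (Real.rpow_nonneg (abs_nonneg _) _)]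
  calc |Real.sin t| ^ (-(4⁻¹:ℝ)) ≤ (2 / Real.pi * m) ^ (-(4⁻¹:ℝ)) :=
        Real.rpow_le_rpow_of_nonpos hsinpos hsin (by norm_num)
    _ = (2 / Real.pi) ^ (-(4⁻¹:ℝ)) * m ^ (-(4⁻¹:ℝ)) :=
        Real.mul_rpow (by positivity) hmpos.le
    _ ≤ g t := by
        rw [hg]
        refine mul_le_mul_of_nonneg_left ?_ (Real.rpow_nonneg (by positivity) _)
        have hmm : m = |t| ∨ m = |t - Real.pi| ∨ m = |t + Real.pi| := by
          rw [hm]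
          rcases min_cases (min |t| |t - Real.pi|) |t + Real.pi| with ⟨h, -⟩ | ⟨h, -⟩
          · rcases min_cases |t| |t - Real.pi| with ⟨h2, -⟩ | ⟨h2, -⟩
            · exact Or.inl (h.trans h2)
            · exact Or.inr (Or.inl (h.trans h2))
          · exact Or.inr (Or.inr h)
        have e0 : |t - 0| = |t| := by rw [sub_zero]
        have em : |t - (-Real.pi)| = |t + Real.pi| := by rw [sub_neg_eq_add]
        have nn : ∀ s : ℝ, 0 ≤ |s| ^ (-(4⁻¹:ℝ)) := fun s => Real.rpow_nonneg (abs_nonneg s) _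
        rcases hmm with h | h | h <;> rw [h] <;> rw [e0, em] <;> nlinarith [nn t, nn (t - Real.pi), nn (t + Real.pi)]

lemma indicator_pi_prod' {M : Type*} [CommMonoidWithZero M] (S : Fin 8 → Set ℝ)
    (f : Fin 8 → ℝ → M) (u : Fin 8 → ℝ) :
    (Set.univ.pi S).indicator (fun v => ∏ m, f m (v m)) u = ∏ m, (S m).indicator (f m) (u m) := by
  by_cases h : u ∈ Set.univ.pi S
  · rw [Set.indicator_of_mem h]
    exact Finset.prod_congr rfl fun m _ => (Set.indicator_of_mem (h m (Set.mem_univ m)) _).symm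
  · rw [Set.indicator_of_notMem h]
    rw [Set.mem_pi] at h
    push_neg at h
    obtain ⟨m, -, hm⟩ := h
    exact (Finset.prod_eq_zero (Finset.mem_univ m) (Set.indicator_of_notMem hm _)).symm

def sKer (u : Fin 8 → ℝ) : ℝ := ∑ m : Fin 8, Real.sin (u m) ^ 2

def fKer (l : Fin 8) (u : Fin 8 → ℝ) : ℂ :=
  Complex.I * ((Real.sin (u l) : ℝ) : ℂ) / ((sKer u : ℝ) : ℂ)

lemma fKer_meas (l : Fin 8) : Measurable (fKer l) := by
  unfold fKer sKer
  fun_prop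

lemma fKer_norm (l : Fin 8) (u : Fin 8 → ℝ) :
    ‖fKer l u‖ = |Real.sin (u l)| / |sKer u| := by
  unfold fKer
  rw [norm_div, norm_mul, Complex.norm_I, one_mul, Complex.norm_real, Complex.norm_real,
    Real.norm_eq_abs, Real.norm_eq_abs]

lemma coord_null (m : Fin 8) (c : ℝ) : volume {u : Fin 8 → ℝ | u m = c} = 0 := by
  classical
  have : {u : Fin 8 → ℝ | u m = c}
      = Set.univ.pi (fun i => if i = m then ({c} : Set ℝ) else Set.univ) := by
    ext u
    simp only [Set.mem_setOf_eq, Set.mem_pi, Set.mem_univ, forall_true_left]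
    constructor
    · intro h i
      by_cases hi : i = m <;> simp [hi, h]
    · intro h
      have := h m
      simpa using this
  rw [this, volume_pi_pi]
  exact Finset.prod_eq_zero (Finset.mem_univ m) (by simp)

lemma sin_ne_zero_of_cube {t : ℝ} (h1 : -Real.pi ≤ t) (h2 : t ≤ Real.pi)
    (h0 : t ≠ 0) (hp : t ≠ Real.pi) (hm : t ≠ -Real.pi) : Real.sin t ≠ 0 := by
  intro hs
  obtain ⟨n, hn⟩ := Real.sin_eq_zero_iff.1 hs
  have hπ := Real.pi_pos
  have : |(n:ℝ)| * Real.pi ≤ Real.pi := by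
    rw [← abs_of_pos hπ, ← abs_mul, hn]
    rw [abs_of_pos hπ]
    rcases le_total 0 t with h | h
    · rw [abs_of_nonneg h]; exact h2
    · rw [abs_of_nonpos h]; linarith
  have hn1 : |(n:ℝ)| ≤ 1 := by
    by_contra hcon
    push_neg at hcon
    nlinarith
  have : n = -1 ∨ n = 0 ∨ n = 1 := by
    have hA : (n:ℝ) ≤ 1 := (le_abs_self _).trans hn1
    have hB : (-1:ℝ) ≤ (n:ℝ) := by
      have := neg_abs_le (n:ℝ); linarith
    have hA' : n ≤ 1 := by exact_mod_cast hA
    have hB' : -1 ≤ n := by exact_mod_cast hB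
    omega
  rcases this with rfl | rfl | rfl <;> simp at hn
  · exact hm (by linarith)
  · exact h0 hn.symm
  · exact hp hn.symm

/-- `fKer l` is in `L²` of the cube. -/
lemma fKer_memLp (l : Fin 8) : MemLp (fKer l) 2 (volume.restrict cube) := by
  classical
  rw [memLp_two_iff_integrable_sq_norm (fKer_meas l).aestronglyMeasurable.restrict]
  -- dominating function
  set G : (Fin 8 → ℝ) → ℝ := fun u => 8⁻¹ * ∏ m : Fin 8, |Real.sin (u m)| ^ (-(4⁻¹:ℝ)) with hG
  have hGint : Integrable G (volume.restrict cube) := by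
    rw [hG]
    apply Integrable.const_mul
    have key : IntegrableOn (fun u : Fin 8 → ℝ => ∏ m : Fin 8, |Real.sin (u m)| ^ (-(4⁻¹:ℝ)))
        cube volume := by
      rw [← integrable_indicator_iff cube_measurable]
      have : cube.indicator (fun u : Fin 8 → ℝ => ∏ m : Fin 8, |Real.sin (u m)| ^ (-(4⁻¹:ℝ)))
          = fun u => ∏ m : Fin 8,
              (Set.Icc (-Real.pi) Real.pi).indicator (fun t => |Real.sin t| ^ (-(4⁻¹:ℝ))) (u m) :=
        funext fun u => by
          rw [show cube = Set.univ.pi (fun _ : Fin 8 => Set.Icc (-Real.pi) Real.pi) from rfl]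
          exact indicator_pi_prod' (M := ℝ) _ (fun _ t => |Real.sin t| ^ (-(4⁻¹:ℝ))) u
      rw [this]
      exact Integrable.fintype_prod (𝕜 := ℝ) fun m =>
        (integrable_indicator_iff measurableSet_Icc).2 sin_rpow_integrable
    exact key
  refine hGint.mono' ((((fKer_meas l).norm.pow_const 2).aestronglyMeasurable).restrict) ?_
  have hae : ∀ᵐ u ∂(volume.restrict cube), ∀ m : Fin 8,
      u m ≠ 0 ∧ u m ≠ Real.pi ∧ u m ≠ -Real.pi := by
    rw [ae_all_iff]
    intro m
    have h3 : (volume.restrict cube) ({u : Fin 8 → ℝ | u m = 0} ∪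
        ({u | u m = Real.pi} ∪ {u | u m = -Real.pi})) = 0 := by
      refine le_antisymm (le_trans (Measure.restrict_apply_le _ _) ?_) (by simp)
      refine le_trans (measure_union_le _ _) ?_
      rw [coord_null m 0, measure_union_le _ _ |>.trans_eq (by rw [coord_null, coord_null]) |>.antisymm (by simp)]
      simp
    have := (measure_eq_zero_iff_ae_notMem (μ := volume.restrict cube)).1 h3
    filter_upwards [this] with u hu
    simp only [Set.mem_union, Set.mem_setOf_eq, not_or] at hu
    exact ⟨hu.1, hu.2.1, hu.2.2⟩
  filter_upwards [ae_restrict_mem cube_measurable, hae] with u hu hne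
  have hucc : ∀ m : Fin 8, u m ∈ Set.Icc (-Real.pi) Real.pi := fun m => hu m (Set.mem_univ m)
  set a : Fin 8 → ℝ := fun m => |Real.sin (u m)| with ha
  have hapos : ∀ m, 0 < a m := fun m => abs_pos.2 <| sin_ne_zero_of_cube
    (hucc m).1 (hucc m).2 (hne m).1 (hne m).2.1 (hne m).2.2
  -- AM-GM
  have hgm := Real.geom_mean_le_arith_mean_weighted Finset.univ (fun _ => (8⁻¹:ℝ))
    (fun m => Real.sin (u m) ^ 2) (fun _ _ => by norm_num)
    (by simp) (fun m _ => sq_nonneg _)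
  have hpow : ∀ m : Fin 8, (Real.sin (u m) ^ 2) ^ ((8⁻¹:ℝ)) = a m ^ ((4⁻¹:ℝ)) := by
    intro m
    rw [ha]
    rw [← sq_abs, ← Real.rpow_natCast |Real.sin (u m)| 2, ← Real.rpow_mul (abs_nonneg _)]
    norm_num
  set P : ℝ := ∏ m : Fin 8, a m ^ ((4⁻¹:ℝ)) with hP
  have hPpos : 0 < P := Finset.prod_pos fun m _ => Real.rpow_pos_of_pos (hapos m) _
  have hsum : ∑ m : Fin 8, (8⁻¹:ℝ) * Real.sin (u m) ^ 2 = 8⁻¹ * sKer u := by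
    rw [sKer, Finset.mul_sum]
  have hKer_ge : 8 * P ≤ sKer u := by
    have : P ≤ 8⁻¹ * sKer u := by
      rw [hP]
      calc ∏ m : Fin 8, a m ^ ((4⁻¹:ℝ)) = ∏ m : Fin 8, (Real.sin (u m) ^ 2) ^ ((8⁻¹:ℝ)) :=
            Finset.prod_congr rfl fun m _ => (hpow m).symm
        _ ≤ ∑ m : Fin 8, (8⁻¹:ℝ) * Real.sin (u m) ^ 2 := hgm
        _ = 8⁻¹ * sKer u := hsum
    linarith
  have hKpos : 0 < sKer u := lt_of_lt_of_le (by positivity) hKer_ge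
  -- pointwise bound
  have hfn : ‖fKer l u‖ = |Real.sin (u l)| / sKer u := by
    rw [fKer_norm, abs_of_pos hKpos]
  have hsq : ‖fKer l u‖ ^ 2 = Real.sin (u l) ^ 2 / sKer u ^ 2 := by
    rw [hfn, div_pow, sq_abs]
  have hterm : Real.sin (u l) ^ 2 ≤ sKer u := by
    rw [sKer]
    exact Finset.single_le_sum (f := fun m => Real.sin (u m) ^ 2)
      (fun m _ => sq_nonneg _) (Finset.mem_univ l)
  have hinv : ∏ m : Fin 8, a m ^ (-(4⁻¹:ℝ)) = P⁻¹ := by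
    rw [hP, ← Finset.prod_inv_distrib]
    exact Finset.prod_congr rfl fun m _ => Real.rpow_neg (hapos m).le _
  rw [Real.norm_eq_abs, abs_of_nonneg (by positivity), hsq, hG]
  calc Real.sin (u l) ^ 2 / sKer u ^ 2 ≤ sKer u / sKer u ^ 2 := by
        exact (div_le_div_iff_of_pos_right (by positivity)).2 hterm
    _ = (sKer u)⁻¹ := by field_simp [sq]
    _ ≤ (8 * P)⁻¹ := by
        apply inv_anti₀ (by positivity) hKer_ge
    _ = 8⁻¹ * ∏ m : Fin 8, a m ^ (-(4⁻¹:ℝ)) := by rw [hinv, mul_inv]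

instance : IsFiniteMeasure (volume.restrict cube) :=
  ⟨by
    rw [Measure.restrict_apply_univ]
    exact (isCompact_univ_pi fun _ => isCompact_Icc).measure_lt_top⟩

def phiF (x : Lat8) (u : Fin 8 → ℝ) : ℂ :=
  ((((2*Real.pi)^4 : ℝ)) : ℂ)⁻¹ *
    Complex.exp (-(Complex.I * (((∑ m : Fin 8, u m * (x m : ℝ)) : ℝ) : ℂ)))

lemma phiF_cont (x : Lat8) : Continuous (phiF x) := by
  unfold phiF
  fun_prop

lemma phiF_norm (x : Lat8) (u : Fin 8 → ℝ) : ‖phiF x u‖ = (((2*Real.pi)^4 : ℝ))⁻¹ := by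
  have hπ := Real.pi_pos
  rw [phiF, norm_mul, norm_inv, Complex.norm_real, Complex.norm_exp]
  have : |((2*Real.pi)^4 : ℝ)⁻¹| = ((2*Real.pi)^4 : ℝ)⁻¹ := abs_of_pos (by positivity)
  simp [Real.norm_eq_abs, this, abs_of_pos hπ]

lemma phiF_memLp (x : Lat8) : MemLp (phiF x) 2 (volume.restrict cube) :=
  MemLp.of_bound (phiF_cont x).aestronglyMeasurable.restrict ((((2*Real.pi)^4 : ℝ))⁻¹)
    (Filter.Eventually.of_forall fun u => le_of_eq (phiF_norm x u))

def vON (x : Lat8) : Lp ℂ 2 (volume.restrict cube) := (phiF_memLp x).toLp (phiF x)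

lemma inner_vON (x : Lat8) (g : (Fin 8 → ℝ) → ℂ) (hg : MemLp g 2 (volume.restrict cube)) :
    (inner ℂ (vON x) (hg.toLp g) : ℂ)
      = ∫ u in cube, (starRingEnd ℂ) (phiF x u) * g u := by
  rw [MeasureTheory.L2.inner_def]
  refine integral_congr_ae ?_
  filter_upwards [(phiF_memLp x).coeFn_toLp, hg.coeFn_toLp] with u h1 h2
  rw [show ((vON x : Lp ℂ 2 (volume.restrict cube)) : (Fin 8 → ℝ) → ℂ) u = phiF x u from h1, h2]
  exact RCLike.inner_apply' _ _

lemma conj_phiF_mul (x : Lat8) (u : Fin 8 → ℝ) (c : ℂ) :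
    (starRingEnd ℂ) (phiF x u) * c
      = ((((2*Real.pi)^4 : ℝ)) : ℂ)⁻¹ *
        (c * Complex.exp (Complex.I * (((∑ m : Fin 8, u m * (x m : ℝ)) : ℝ) : ℂ))) := by
  rw [phiF, map_mul, map_inv₀, Complex.conj_ofReal, ← Complex.exp_conj]
  simp only [map_neg, map_mul, Complex.conj_I, Complex.conj_ofReal]
  ring_nf

lemma vON_orthonormal : Orthonormal ℂ vON := by
  rw [orthonormal_iff_ite]
  intro x y
  rw [show vON y = (phiF_memLp y).toLp (phiF y) from rfl, inner_vON x (phiF y) (phiF_memLp y)]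
  have hptwise : ∀ u : Fin 8 → ℝ, (starRingEnd ℂ) (phiF x u) * phiF y u
      = ((((2*Real.pi)^4 : ℝ)) : ℂ)⁻¹ * ((((2*Real.pi)^4 : ℝ)) : ℂ)⁻¹ *
        ∏ m : Fin 8, Complex.exp (Complex.I * ((x m - y m : ℤ) : ℂ) * (u m : ℂ)) := by
    intro u
    rw [conj_phiF_mul, phiF]
    rw [← Complex.exp_sum]
    have : (-(Complex.I * (((∑ m : Fin 8, u m * (y m : ℝ)) : ℝ) : ℂ)))
        + Complex.I * (((∑ m : Fin 8, u m * (x m : ℝ)) : ℝ) : ℂ)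
        = ∑ m : Fin 8, Complex.I * ((x m - y m : ℤ) : ℂ) * (u m : ℂ) := by
      push_cast
      rw [neg_add_eq_sub, Finset.mul_sum, Finset.mul_sum, ← Finset.sum_sub_distrib]
      exact Finset.sum_congr rfl fun m _ => by ring
    rw [← this, Complex.exp_add]
    ring
  calc (∫ u in cube, (starRingEnd ℂ) (phiF x u) * phiF y u)
      = ∫ u in cube, ((((2*Real.pi)^4 : ℝ)) : ℂ)⁻¹ * ((((2*Real.pi)^4 : ℝ)) : ℂ)⁻¹ *
          ∏ m : Fin 8, Complex.exp (Complex.I * ((x m - y m : ℤ) : ℂ) * (u m : ℂ)) := by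
        exact integral_congr_ae (Filter.Eventually.of_forall fun u => hptwise u)
    _ = ((((2*Real.pi)^4 : ℝ)) : ℂ)⁻¹ * ((((2*Real.pi)^4 : ℝ)) : ℂ)⁻¹ *
          ∫ u in cube, ∏ m : Fin 8, Complex.exp (Complex.I * ((x m - y m : ℤ) : ℂ) * (u m : ℂ)) :=
        MeasureTheory.integral_const_mul _ _
    _ = ((((2*Real.pi)^4 : ℝ)) : ℂ)⁻¹ * ((((2*Real.pi)^4 : ℝ)) : ℂ)⁻¹ *
          ∏ m : Fin 8, (if (x m - y m : ℤ) = 0 then ((2*Real.pi : ℝ) : ℂ) else 0) := by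
        rw [cube_integral_prod (fun m t => Complex.exp (Complex.I * ((x m - y m : ℤ) : ℂ) * (t : ℂ)))]
        congr 1
        exact Finset.prod_congr rfl fun m _ => int1d (x m - y m)
    _ = if x = y then 1 else 0 := by
        by_cases hxy : x = y
        · subst hxy
          rw [if_pos rfl]
          have : ∀ m : Fin 8, (if (x m - x m : ℤ) = 0 then ((2*Real.pi : ℝ) : ℂ) else 0)
              = ((2*Real.pi : ℝ) : ℂ) := fun m => by rw [if_pos (sub_self _)]
          rw [Finset.prod_congr rfl (fun m _ => this m), Finset.prod_const]
          have hpi : (Real.pi : ℂ) ≠ 0 := Complex.ofReal_ne_zero.2 Real.pi_ne_zero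
          simp only [Complex.ofReal_pow, Complex.ofReal_mul, Complex.ofReal_ofNat, Finset.card_univ,
            Fintype.card_fin]
          field_simp
        · rw [if_neg hxy]
          obtain ⟨m, hm⟩ : ∃ m, x m ≠ y m := by
            by_contra hcon
            push_neg at hcon
            exact hxy (funext hcon)
          rw [Finset.prod_eq_zero (Finset.mem_univ m) (by rw [if_neg (sub_ne_zero.2 hm)]), mul_zero]

lemma E1coeff_eq (l : Fin 8) (x : Lat8) :
    E1coeff l x = -((((2*Real.pi)^8 : ℝ)) : ℂ)⁻¹ * ((((2*Real.pi)^4 : ℝ)) : ℂ) *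
      (inner ℂ (vON x) ((fKer_memLp l).toLp (fKer l)) : ℂ) := by
  have hC : ((((2*Real.pi)^4 : ℝ)) : ℂ) ≠ 0 := by
    rw [Complex.ofReal_ne_zero]
    positivity
  have h1 : (inner ℂ (vON x) ((fKer_memLp l).toLp (fKer l)) : ℂ)
      = ((((2*Real.pi)^4 : ℝ)) : ℂ)⁻¹ * ∫ u in cube,
          fKer l u * Complex.exp (Complex.I * (((∑ m : Fin 8, u m * (x m : ℝ)) : ℝ) : ℂ)) := by
    rw [inner_vON x (fKer l) (fKer_memLp l)]
    rw [integral_congr_ae (Filter.Eventually.of_forall fun u => conj_phiF_mul x u (fKer l u))]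
    exact MeasureTheory.integral_const_mul _ _
  have h2 : E1coeff l x = -((((2*Real.pi)^8 : ℝ)) : ℂ)⁻¹ * ∫ u in cube,
      fKer l u * Complex.exp (Complex.I * (((∑ m : Fin 8, u m * (x m : ℝ)) : ℝ) : ℂ)) := rfl
  rw [h2, h1, mul_assoc, ← mul_assoc ((((2*Real.pi)^4 : ℝ)) : ℂ), mul_inv_cancel₀ hC, one_mul]

lemma summable_E1coeff (l : Fin 8) : Summable fun x : Lat8 => ‖E1coeff l x‖^2 := by
  have hB := vON_orthonormal.inner_products_summable ((fKer_memLp l).toLp (fKer l))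
  have : (fun x : Lat8 => ‖E1coeff l x‖^2)
      = fun x : Lat8 => (‖-((((2*Real.pi)^8 : ℝ)) : ℂ)⁻¹ * ((((2*Real.pi)^4 : ℝ)) : ℂ)‖^2) *
          ‖(inner ℂ (vON x) ((fKer_memLp l).toLp (fKer l)) : ℂ)‖^2 := by
    funext x
    rw [E1coeff_eq l x, norm_mul, mul_pow]
  rw [this]
  exact hB.mul_left _



/-- `E¹` is square-summable on the unit lattice. -/
theorem E1_sq_summable : Summable fun x : Lat8 => ‖E1 x‖^2 := by
  have hnn : ∀ x : Lat8, (0:ℝ) ≤ ‖E1 x‖^2 := fun x => sq_nonneg _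
  have hsum : Summable fun x : Lat8 => ∑ l : Fin 8, ‖E1coeff l x‖^2 :=
    summable_sum fun l _ => summable_E1coeff l
  refine Summable.of_nonneg_of_le hnn (fun x => ?_) hsum
  have hexp : ‖E1 x‖^2 = ∑ l : Fin 8, ‖E1 x l‖^2 := by
    rw [EuclideanSpace.norm_eq, Real.sq_sqrt]
    exact Finset.sum_nonneg fun l _ => sq_nonneg _
  rw [hexp]
  refine Finset.sum_le_sum fun l _ => ?_
  have h1 : ‖E1 x l‖^2 = (ebarSign l)^2 * ((E1coeff l x).re)^2 := by
    rw [Real.norm_eq_abs, sq_abs, E1, PiLp.toLp_apply, mul_pow]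
  have h2 : (ebarSign l)^2 = 1 := by
    rw [ebarSign]
    split <;> norm_num
  rw [h1, h2, one_mul]
  have h3 : |(E1coeff l x).re| ≤ ‖E1coeff l x‖ := by
    exact Complex.abs_re_le_norm _
  calc ((E1coeff l x).re)^2 = |(E1coeff l x).re|^2 := (sq_abs _).symm
    _ ≤ ‖E1coeff l x‖^2 := by
        exact pow_le_pow_left₀ (abs_nonneg _) h3 2


end
end

section
/- Let B ⊂ ℝ^8 be a nonempty bounded domain (open and connected) such that every point of the topological boundary ∂B lies in the closure of ℝ^8∖(cl B). For h > 0 let B^h := (B ∩ ℤ^8_h)° be the discrete interior of B ∩ ℤ^8_h. Then B^h converges to B as h → 0, and since B^h ⊆ B, the rate condition h^8·#(B^h∖B) = O(h²) holds trivially, i.e. B = B^h + O(h²). -/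
open MeasureTheory Real Filter Topology
open scoped BigOperators

noncomputable section

/-! Auxiliary lemmas for the lattice approximation theorem. -/

section AuxLA

lemma la_norm_le (v : Oct) {M : ℝ} (hM : 0 ≤ M) (hv : ∀ k, |v k| ≤ M) : ‖v‖ ≤ 3 * M := by
  rw [EuclideanSpace.norm_eq]
  have h1 : ∑ k : Fin 8, ‖v k‖ ^ 2 ≤ ∑ _k : Fin 8, M ^ 2 := by
    refine Finset.sum_le_sum fun k _ => ?_
    have := hv k
    have := abs_nonneg (v k)
    rw [Real.norm_eq_abs]
    nlinarith
  have h2 : (∑ _k : Fin 8, M ^ 2 : ℝ) = 8 * M ^ 2 := by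
    simp [Finset.sum_const, Fintype.card_fin, nsmul_eq_mul]
  calc Real.sqrt (∑ k : Fin 8, ‖v k‖ ^ 2) ≤ Real.sqrt ((3 * M) ^ 2) := by
        apply Real.sqrt_le_sqrt; rw [h2] at h1; nlinarith
    _ = 3 * M := Real.sqrt_sq (by linarith)

lemma la_abs_coord_le (v : Oct) (k : Fin 8) : |v k| ≤ ‖v‖ := by
  rw [EuclideanSpace.norm_eq]
  have h1 : |v k| = Real.sqrt (‖v k‖ ^ 2) := by
    rw [Real.sqrt_sq_eq_abs, Real.norm_eq_abs, abs_abs]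
  rw [h1]
  apply Real.sqrt_le_sqrt
  exact Finset.single_le_sum (f := fun j => ‖v j‖ ^ 2) (fun j _ => sq_nonneg _)
    (Finset.mem_univ k)

lemma la_mem_nbhdSet_self (x : Lat8) : x ∈ nbhdSet x := Set.mem_union_left _ rfl

lemma la_dist_nbhd {h : ℝ} (hh : 0 < h) {b x : Lat8} (hb : b ∈ nbhdSet x) :
    dist (toOct h b) (toOct h x) ≤ 3 * h := by
  rw [dist_eq_norm]
  refine la_norm_le _ hh.le fun k => ?_
  have hco : (toOct h b - toOct h x) k = h * ((b k : ℝ) - (x k : ℝ)) := by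
    simp [toOct]; ring
  rw [hco, abs_mul, abs_of_pos hh]
  have : |((b k : ℝ) - (x k : ℝ))| ≤ 1 := by
    rcases hb with hb | hb
    · rcases hb with rfl; simp
    · simp only [Set.mem_iUnion] at hb
      obtain ⟨l, hl⟩ := hb
      rcases hl with rfl | hl
      · simp only [Pi.add_apply, unitL]
        push_cast
        split <;> simp
      · rcases hl with rfl
        simp only [Pi.sub_apply, unitL]
        push_cast
        split <;> simp
  nlinarith

lemma la_dist_rnd {h : ℝ} (hh : 0 < h) (p : Oct) :
    dist (toOct h (fun k => round (p k / h))) p ≤ 2 * h := by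
  rw [dist_eq_norm]
  have key : ∀ k, |(toOct h (fun k => round (p k / h)) - p) k| ≤ h / 2 := by
    intro k
    have hco : (toOct h (fun k => round (p k / h)) - p) k
        = h * ((round (p k / h) : ℝ) - p k / h) := by
      simp [toOct]
      field_simp
    rw [hco, abs_mul, abs_of_pos hh, abs_sub_comm]
    have := abs_sub_round (p k / h)
    nlinarith
  have := la_norm_le _ (by linarith : (0:ℝ) ≤ h / 2) key
  linarith

lemma la_mem_dIntS {S : Set Lat8} {x : Lat8} : x ∈ dIntS S ↔ nbhdSet x ⊆ S := by
  constructor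
  · rintro ⟨hxS, hxB⟩ y hy
    by_contra hyS
    exact hxB ⟨⟨x, la_mem_nbhdSet_self x, hxS⟩, ⟨y, hy, hyS⟩⟩
  · intro hsub
    refine ⟨hsub (la_mem_nbhdSet_self x), ?_⟩
    rintro ⟨-, ⟨y, hy, hyc⟩⟩
    exact hyc (hsub hy)

lemma la_mem_dBdry_of {T : Set Lat8} {y z : Lat8} (hy : y ∈ T) (hz : z ∈ nbhdSet y)
    (hzT : z ∉ T) : y ∈ dBdryS T :=
  ⟨⟨y, la_mem_nbhdSet_self y, hy⟩, ⟨z, hz, hzT⟩⟩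

/-- Walking a lattice path from a point in `T` to a point outside `T`, we meet the
discrete boundary of `T` at a point componentwise between the endpoints. -/
lemma la_path (T : Set Lat8) : ∀ n : ℕ, ∀ x z : Lat8,
    (∑ k : Fin 8, (x k - z k).natAbs) = n → x ∈ T → z ∉ T →
    ∃ b ∈ dBdryS T, ∀ k, min (x k) (z k) ≤ b k ∧ b k ≤ max (x k) (z k) := by
  intro n
  induction n using Nat.strong_induction_on with
  | _ n ih =>
    intro x z hn hx hz
    by_cases hxz : x = z
    · exact absurd (hxz ▸ hx) hz
    have hk : ∃ k, x k ≠ z k := by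
      by_contra h; push_neg at h; exact hxz (funext h)
    obtain ⟨k, hk⟩ := hk
    have key : ∃ x' : Lat8, x' ∈ nbhdSet x ∧ (∀ j, j ≠ k → x' j = x j) ∧
        ((x k < z k ∧ x' k = x k + 1) ∨ (z k < x k ∧ x' k = x k - 1)) := by
      rcases lt_or_ge (x k) (z k) with hord | hord
      · exact ⟨x + unitL k, Set.mem_union_right _ (Set.mem_iUnion.mpr ⟨k, Or.inl rfl⟩),
          fun j hj => by simp [unitL, hj], Or.inl ⟨hord, by simp [unitL]⟩⟩
      · have hord' : z k < x k := hord.lt_of_ne (Ne.symm hk)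
        exact ⟨x - unitL k, Set.mem_union_right _ (Set.mem_iUnion.mpr ⟨k, Or.inr rfl⟩),
          fun j hj => by simp [unitL, hj], Or.inr ⟨hord', by simp [unitL, sub_eq_add_neg]⟩⟩
    obtain ⟨x', hx'nb, hx'j, hx'k⟩ := key
    have hle : ∀ j, (x' j - z j).natAbs ≤ (x j - z j).natAbs := by
      intro j
      by_cases hj : j = k
      · subst hj; rcases hx'k with ⟨h1, h2⟩ | ⟨h1, h2⟩ <;> omega
      · rw [hx'j j hj]
    have hlt : (x' k - z k).natAbs < (x k - z k).natAbs := by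
      rcases hx'k with ⟨h1, h2⟩ | ⟨h1, h2⟩ <;> omega
    have hsum : (∑ j : Fin 8, (x' j - z j).natAbs) < n := by
      rw [← hn]
      exact Finset.sum_lt_sum (fun j _ => hle j) ⟨k, Finset.mem_univ k, hlt⟩
    by_cases hx'T : x' ∈ T
    · obtain ⟨b, hb, hbet⟩ := ih _ hsum x' z rfl hx'T hz
      refine ⟨b, hb, fun j => ?_⟩
      have h1 := (hbet j).1
      have h2 := (hbet j).2
      by_cases hj : j = k
      · subst hj; rcases hx'k with ⟨ha1, ha2⟩ | ⟨ha1, ha2⟩ <;> omega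
      · rw [hx'j j hj] at h1 h2; exact ⟨h1, h2⟩
    · exact ⟨x, la_mem_dBdry_of hx hx'nb hx'T, fun j => ⟨min_le_left _ _, le_max_left _ _⟩⟩

/-- A segment from a point of an open set `B` to a point outside `B` meets the frontier. -/
lemma la_frontier_segment {B : Set Oct} (hB : IsOpen B) {p q : Oct} (hp : p ∈ B)
    (hq : q ∉ B) : ∃ c ∈ frontier B, c ∈ segment ℝ p q := by
  by_cases hqc : q ∈ closure B
  · exact ⟨q, ⟨hqc, fun h => hq (hB.interior_eq ▸ h)⟩, right_mem_segment _ _ _⟩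
  by_contra hno
  push_neg at hno
  have hconn : IsPreconnected (segment ℝ p q) := (convex_segment p q).isPreconnected
  have hcover : segment ℝ p q ⊆ B ∪ (closure B)ᶜ := by
    intro c hc
    by_cases hcB : c ∈ B
    · exact Or.inl hcB
    by_cases hcc : c ∈ closure B
    · exact absurd hc (hno c ⟨hcc, fun h => hcB (hB.interior_eq ▸ h)⟩)
    · exact Or.inr hcc
  obtain ⟨c, -, hc1, hc2⟩ := hconn B (closure B)ᶜ hB isClosed_closure.isOpen_compl hcover
    ⟨p, left_mem_segment _ _ _, hp⟩ ⟨q, right_mem_segment _ _ _, hqc⟩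
  exact hc2 (subset_closure hc1)

/-- Pointwise to uniform approximation via compactness. -/
lemma la_uniformize (K : Set Oct) (hK : IsCompact K) (T : ℝ → Set Lat8) (ε : ℝ)
    (hε : 0 < ε)
    (H : ∀ a ∈ K, ∃ δ > (0:ℝ), ∀ h : ℝ, 0 < h → h < δ →
      ∃ b ∈ T h, dist a (toOct h b) ≤ ε / 2) :
    ∃ δ > (0:ℝ), ∀ h : ℝ, 0 < h → h < δ → ∀ a ∈ K, ∃ b ∈ T h, dist a (toOct h b) ≤ ε := by
  choose! δ hδ hH using H
  obtain ⟨t, htK, htcov⟩ := hK.elim_nhds_subcover (fun a => Metric.ball a (ε / 2))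
    (fun a _ => Metric.ball_mem_nhds a (by linarith))
  by_cases ht : t.Nonempty
  · refine ⟨t.inf' ht δ, ?_, fun h h0 hh a ha => ?_⟩
    · exact (Finset.lt_inf'_iff ht).mpr fun a hat => hδ a (htK a hat)
    · obtain ⟨a₀, ha₀t, ha₀⟩ := Set.mem_iUnion₂.mp (htcov ha)
      obtain ⟨b, hb, hdb⟩ := hH a₀ (htK a₀ ha₀t) h h0
        (hh.trans_le (Finset.inf'_le _ ha₀t))
      refine ⟨b, hb, ?_⟩
      have : dist a a₀ < ε / 2 := Metric.mem_ball.mp ha₀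
      calc dist a (toOct h b) ≤ dist a a₀ + dist a₀ (toOct h b) := dist_triangle _ _ _
        _ ≤ ε := by linarith
  · refine ⟨1, one_pos, fun h h0 hh a ha => absurd (htcov ha) ?_⟩
    rw [Finset.not_nonempty_iff_eq_empty] at ht
    simp [ht]

/-- Near each point of `B` there is, for small `h`, a discrete interior point. -/
lemma la_near_interior {B : Set Oct} (hB : IsOpen B) {p : Oct} (hp : p ∈ B) :
    ∃ δ > (0:ℝ), ∀ h : ℝ, 0 < h → h < δ →
      ∃ x : Lat8, x ∈ dIntS {y : Lat8 | toOct h y ∈ B} ∧ dist p (toOct h x) ≤ 2 * h := by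
  obtain ⟨r, hr, hball⟩ := Metric.isOpen_iff.mp hB p hp
  refine ⟨r / 5, by positivity, fun h h0 hh => ?_⟩
  set x : Lat8 := fun k => round (p k / h) with hxdef
  have hdx : dist (toOct h x) p ≤ 2 * h := la_dist_rnd h0 p
  refine ⟨x, la_mem_dIntS.mpr fun y hy => ?_, by rwa [dist_comm] at hdx⟩
  apply hball
  have h1 : dist (toOct h y) (toOct h x) ≤ 3 * h := la_dist_nbhd h0 hy
  have : dist (toOct h y) p ≤ 5 * h := by
    calc dist (toOct h y) p ≤ dist (toOct h y) (toOct h x) + dist (toOct h x) p :=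
          dist_triangle _ _ _
      _ ≤ 5 * h := by linarith
  exact Metric.mem_ball.mpr (by linarith)

/-- Componentwise-between lattice points stay close to `a`. -/
lemma la_coord_between {h : ℝ} (h0 : 0 < h) (a : Oct) {x z b : Lat8} {M : ℝ} (hM : 0 ≤ M)
    (hb : ∀ k, min (x k) (z k) ≤ b k ∧ b k ≤ max (x k) (z k))
    (hx : dist (toOct h x) a ≤ M) (hz : dist (toOct h z) a ≤ M) :
    dist (toOct h b) a ≤ 3 * M := by
  rw [dist_eq_norm] at hx hz ⊢
  refine la_norm_le _ hM fun k => ?_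
  have hco : ∀ w : Lat8, (toOct h w - a) k = h * (w k : ℝ) - a k := by
    intro w; simp [toOct]
  have h1 : |h * (x k : ℝ) - a k| ≤ M := (hco x ▸ la_abs_coord_le (toOct h x - a) k).trans hx
  have h2 : |h * (z k : ℝ) - a k| ≤ M := (hco z ▸ la_abs_coord_le (toOct h z - a) k).trans hz
  rw [hco b]
  rw [abs_le] at h1 h2 ⊢
  have hbk1 : (min (x k) (z k) : ℝ) ≤ (b k : ℝ) := by exact_mod_cast Int.cast_le.mpr (hb k).1
  have hbk2 : ((b k : ℝ)) ≤ (max (x k) (z k) : ℝ) := by exact_mod_cast Int.cast_le.mpr (hb k).2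
  push_cast at hbk1 hbk2
  rcases le_total ((x k : ℝ)) ((z k : ℝ)) with hle | hle
  · rw [min_eq_left hle] at hbk1
    rw [max_eq_right hle] at hbk2
    constructor <;> nlinarith
  · rw [min_eq_right hle] at hbk1
    rw [max_eq_left hle] at hbk2
    constructor <;> nlinarith

end AuxLA

/-- lattice approximation of bounded domains at rate `O(h²)`. -/
theorem lattice_approximation (B : Set Oct) (hne : B.Nonempty) (hopen : IsOpen B)
    (hconn : IsConnected B) (hbdd : Bornology.IsBounded B)
    (hfr : frontier B ⊆ closure (closure B)ᶜ) :
    ConvergesTo (fun h => dIntS {x : Lat8 | toOct h x ∈ B}) B ∧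
      RateO2 (fun h => dIntS {x : Lat8 | toOct h x ∈ B}) B := by
  have hSsub : ∀ h : ℝ, dIntS {x : Lat8 | toOct h x ∈ B} ⊆ {x : Lat8 | toOct h x ∈ B} :=
    fun h => Set.diff_subset
  constructor
  · intro ε hε
    have hclB : IsCompact (closure B) := hbdd.isCompact_closure
    have hfrC : IsCompact (frontier B) :=
      hclB.of_isClosed_subset isClosed_frontier frontier_subset_closure
    -- Part 1: every frontier point is near a discrete boundary point.
    have part1 : ∃ δ1 > (0:ℝ), ∀ h : ℝ, 0 < h → h < δ1 → ∀ a ∈ frontier B,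
        ∃ b ∈ dBdryS (dIntS {x : Lat8 | toOct h x ∈ B}), dist a (toOct h b) ≤ ε := by
      apply la_uniformize _ hfrC _ ε hε
      intro a ha
      obtain ⟨p, hpB, hpd⟩ := Metric.mem_closure_iff.mp (frontier_subset_closure ha)
        (ε / 24) (by linarith)
      obtain ⟨q, hqC, hqd⟩ := Metric.mem_closure_iff.mp (hfr ha) (ε / 24) (by linarith)
      obtain ⟨r', hr', hball'⟩ := Metric.isOpen_iff.mp isClosed_closure.isOpen_compl q hqC
      obtain ⟨δ', hδ', Hint⟩ := la_near_interior hopen hpB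
      refine ⟨min (min δ' (r' / 3)) (ε / 16),
        lt_min (lt_min hδ' (by linarith)) (by linarith), fun h h0 hh => ?_⟩
      have hhδ' : h < δ' := hh.trans_le ((min_le_left _ _).trans (min_le_left _ _))
      have hhr' : h < r' / 3 := hh.trans_le ((min_le_left _ _).trans (min_le_right _ _))
      have hhε : h < ε / 16 := hh.trans_le (min_le_right _ _)
      obtain ⟨x, hxT, hdx⟩ := Hint h h0 hhδ'
      set z : Lat8 := fun k => round (q k / h) with hzdef
      have hdz : dist (toOct h z) q ≤ 2 * h := la_dist_rnd h0 q
      have hzO : toOct h z ∉ B := by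
        intro hmem
        exact hball' (Metric.mem_ball.mpr (by linarith)) (subset_closure hmem)
      have hzT : z ∉ dIntS {x : Lat8 | toOct h x ∈ B} := fun hz => hzO (hSsub h hz)
      obtain ⟨b, hbB, hbet⟩ := la_path _ _ x z rfl hxT hzT
      refine ⟨b, hbB, ?_⟩
      have h1 : dist (toOct h x) a ≤ ε / 24 + 2 * h := by
        calc dist (toOct h x) a ≤ dist (toOct h x) p + dist p a := dist_triangle _ _ _
          _ ≤ ε / 24 + 2 * h := by
              rw [dist_comm (toOct h x) p, dist_comm p a]; linarith
      have h2 : dist (toOct h z) a ≤ ε / 24 + 2 * h := by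
        calc dist (toOct h z) a ≤ dist (toOct h z) q + dist q a := dist_triangle _ _ _
          _ ≤ ε / 24 + 2 * h := by rw [dist_comm q a]; linarith
      have hfin := la_coord_between h0 a (by linarith : (0:ℝ) ≤ ε / 24 + 2 * h) hbet h1 h2
      rw [dist_comm]
      calc dist (toOct h b) a ≤ 3 * (ε / 24 + 2 * h) := hfin
        _ ≤ ε / 2 := by linarith
    -- Part 3: every closure point is near a discrete interior point.
    have part3 : ∃ δ3 > (0:ℝ), ∀ h : ℝ, 0 < h → h < δ3 → ∀ a ∈ closure B,
        ∃ b ∈ dIntS {x : Lat8 | toOct h x ∈ B}, dist a (toOct h b) ≤ ε := by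
      apply la_uniformize _ hclB _ ε hε
      intro a ha
      obtain ⟨p, hpB, hpd⟩ := Metric.mem_closure_iff.mp ha (ε / 4) (by linarith)
      obtain ⟨δ', hδ', Hint⟩ := la_near_interior hopen hpB
      refine ⟨min δ' (ε / 8), lt_min hδ' (by linarith), fun h h0 hh => ?_⟩
      obtain ⟨x, hx, hdx⟩ := Hint h h0 (hh.trans_le (min_le_left _ _))
      have hh2 : h < ε / 8 := hh.trans_le (min_le_right _ _)
      refine ⟨x, hx, ?_⟩
      calc dist a (toOct h x) ≤ dist a p + dist p (toOct h x) := dist_triangle _ _ _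
        _ ≤ ε / 2 := by linarith
    obtain ⟨δ1, hδ1, H1⟩ := part1
    obtain ⟨δ3, hδ3, H3⟩ := part3
    refine ⟨min δ1 (min δ3 (ε / 6)), lt_min hδ1 (lt_min hδ3 (by linarith)),
      fun h h0 hh => ?_⟩
    have hh1 : h < δ1 := hh.trans_le (min_le_left _ _)
    have hh3 : h < δ3 := hh.trans_le ((min_le_right _ _).trans (min_le_left _ _))
    have hh6 : h < ε / 6 := hh.trans_le ((min_le_right _ _).trans (min_le_right _ _))
    refine ⟨H1 h h0 hh1, ?_, H3 h h0 hh3, ?_⟩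
    · -- Part 2: every discrete boundary point is near the frontier.
      rintro b ⟨⟨y, hynb, hyT⟩, ⟨z, hznb, hzT⟩⟩
      have hyB : toOct h y ∈ B := hSsub h hyT
      have hq : ∃ q : Lat8, toOct h q ∉ B ∧ dist (toOct h q) (toOct h b) ≤ 6 * h := by
        by_cases hzS : z ∈ {x : Lat8 | toOct h x ∈ B}
        · have hzbd : z ∈ dBdryS {x : Lat8 | toOct h x ∈ B} := by
            by_contra h'; exact hzT ⟨hzS, h'⟩
          obtain ⟨-, ⟨w, hwnb, hwS⟩⟩ := hzbd
          refine ⟨w, hwS, ?_⟩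
          calc dist (toOct h w) (toOct h b)
              ≤ dist (toOct h w) (toOct h z) + dist (toOct h z) (toOct h b) :=
                dist_triangle _ _ _
            _ ≤ 6 * h := by
                have hw := la_dist_nbhd h0 hwnb
                have hz' := la_dist_nbhd h0 hznb
                linarith
        · exact ⟨z, hzS, (la_dist_nbhd h0 hznb).trans (by linarith)⟩
      obtain ⟨q, hqB, hqd⟩ := hq
      obtain ⟨c, hcf, hcs⟩ := la_frontier_segment hopen hyB hqB
      refine ⟨c, hcf, ?_⟩
      have hseg : segment ℝ (toOct h y) (toOct h q) ⊆ Metric.closedBall (toOct h b) (6 * h) := by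
        apply (convex_closedBall _ _).segment_subset
        · exact Metric.mem_closedBall.mpr ((la_dist_nbhd h0 hynb).trans (by linarith))
        · exact Metric.mem_closedBall.mpr hqd
      have hcd : dist c (toOct h b) ≤ 6 * h := Metric.mem_closedBall.mp (hseg hcs)
      rw [dist_comm]
      linarith
    · -- Part 4: discrete interior points lie in `B`, hence in its closure.
      intro b hb
      exact ⟨toOct h b, subset_closure (hSsub h hb), by simpa using hε.le⟩
  · unfold RateO2
    have hempty : ∀ h : ℝ,
        ((fun h => dIntS {x : Lat8 | toOct h x ∈ B}) h \ {x : Lat8 | toOct h x ∈ B}) = ∅ :=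
      fun h => Set.diff_eq_empty.mpr (hSsub h)
    simp only [hempty, Set.ncard_empty, Nat.cast_zero, mul_zero]
    exact Asymptotics.isBigO_zero _ _

end
end
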